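/- Let p ≥ 3 be a prime, let k be an integer with 2 ≤ k ≤ p−1, and let c ≥ 1 be an integer with p ∤ c. Set Q = (1+X)^c − 1 ∈ ℤ_p[[X]] and let δ_k = (−1)^k · B_{k−1}/(k−1), which is a p-integral rational number and hence defines an element of ℤ_p. Then c^{k−1}·X^{k−1}·h_{k−2}(Q) − Q^{k−1}·h_{k−2}(X) − (c^{k−1} − 1)·δ_k·X^{k−1}·Q^{k−1} lies in X^k·Q^{k−1}·ℤ_p[[X]]. (This expresses that (χ(γ)^{k−1}γ − 1)(x_k) ∈ π·A⁺_{ℚ_p}, where x_k = π^{1−k}h_{k−2}(π) − δ_k and γ ∈ Γ satisfies χ(γ) = c.) -/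

import Mathlib

/-- The polynomials `h_j`, defined by `h_0 = 1` and
`h_j = (1+X) * (j * h_{j-1} - X * h_{j-1}')`. -/
noncomputable def hPoly : ℕ → Polynomial ℤ
  | 0 => 1
  | (j + 1) => (1 + Polynomial.X) *
      ((j + 1 : ℤ) • hPoly j - Polynomial.X * Polynomial.derivative (hPoly j))

/-!
Write `∂ = (1 + X) d/dX`, `Q = (1 + X)^c - 1` and `k = m + 2`. Since `∂Q = c (1 + Q)`, one has
`(-∂)^m (1/X) = h_m(X) / X^(m+1)` and `(-∂)^m (c/Q) = c^(m+1) h_m(Q) / Q^(m+1)`, so the difference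
in the theorem is `X^(m+1) Q^(m+1) ((-∂)^m W - (c^(m+1) - 1) δ)` for the power series
`W = c/Q - 1/X`. Under `X = e^t - 1` the derivation `∂` becomes `d/dt` and `W` becomes
`(B(ct) - B(t)) / t` with `B(t) = t / (e^t - 1)`, so the constant term of `(-∂)^m W` is exactly
`(c^(m+1) - 1) δ`, and `X^(m+2) Q^(m+1)` divides the difference over `ℚ`. As `Q / X` is a unit
when `p ∤ c`, this is divisibility by `X^(2m+3)`, which descends from `ℚ` to `ℤ_p`; finally
`δ ∈ ℤ_p` by von Staudt–Clausen.
-/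

theorem Padic.norm_bernoulli_le_one {p : ℕ} [Fact p.Prime] {n : ℕ} (hn : ¬ (p - 1) ∣ n) :
    ‖((bernoulli n : ℚ) : ℚ_[p])‖ ≤ 1 := by
  have hp := (Fact.out : p.Prime)
  obtain ⟨j, rfl | rfl⟩ := n.even_or_odd'
  · obtain ⟨z, hz⟩ := Bernoulli.vonStaudt_clausen j
    rw [eq_sub_of_add_eq hz.symm, Rat.cast_sub, Rat.cast_intCast, sub_eq_add_neg]
    refine (Padic.nonarchimedean _ _).trans (max_le (Padic.norm_int_le_one z) ?_)
    rw [norm_neg, Rat.cast_sum]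
    refine IsUltrametricDist.norm_sum_le_of_forall_le_of_nonneg zero_le_one fun q hq => ?_
    simp only [Finset.mem_filter] at hq
    have hqp : p.Coprime q := (Nat.coprime_primes hp hq.2.1).2 fun h => hn (h ▸ hq.2.2)
    simp [Padic.norm_natCast_eq_one_iff.2 hqp]
  · rcases j.eq_zero_or_pos with rfl | hj
    · have hp2 : p.Coprime 2 := (Nat.coprime_primes hp Nat.prime_two).2 (by rintro rfl; simp at hn)
      have h2 : ‖(2 : ℚ_[p])‖ = 1 := by exact_mod_cast Padic.norm_natCast_eq_one_iff.2 hp2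
      simp [bernoulli_one, h2]
    · rw [bernoulli_eq_zero_of_odd (odd_two_mul_add_one j) (by omega)]
      simp

theorem Padic.norm_bernoulli_div_le_one {p : ℕ} [Fact p.Prime] {n : ℕ} (hn : ¬ (p - 1) ∣ n)
    (hpn : ¬ p ∣ n) : ‖((bernoulli n / n : ℚ) : ℚ_[p])‖ ≤ 1 := by
  rw [Rat.cast_div, norm_div, Rat.cast_natCast,
    Padic.norm_natCast_eq_one_iff.2 ((Nat.Prime.coprime_iff_not_dvd Fact.out).2 hpn), div_one]
  exact Padic.norm_bernoulli_le_one hn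

open PowerSeries

lemma aeval_hPoly_succ {B : Type*} [CommRing B] [Algebra ℤ B] (f : B) (j : ℕ) :
    Polynomial.aeval f (hPoly (j + 1)) =
      (1 + f) * ((j + 1) * Polynomial.aeval f (hPoly j)
        - f * Polynomial.aeval f (Polynomial.derivative (hPoly j))) := by
  simp [hPoly, zsmul_eq_mul]

namespace PowerSeries

variable {A : Type*} [CommRing A]

variable (A) in
-- Under `X = exp t - 1` this is `d/dt`; that is where the Bernoulli numbers come from.
noncomputable def onePlusXDeriv : Derivation ℤ A⟦X⟧ A⟦X⟧ :=
  (1 + X : A⟦X⟧) • (d⁄dX A).restrictScalars ℤ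

lemma onePlusXDeriv_apply (f : A⟦X⟧) : onePlusXDeriv A f = (1 + X) * d⁄dX A f := rfl

lemma onePlusXDeriv_X : onePlusXDeriv A X = 1 + X := by
  simp [onePlusXDeriv_apply]

lemma onePlusXDeriv_one_add_X_pow (c : ℕ) :
    onePlusXDeriv A ((1 + X) ^ c) = (c : A⟦X⟧) * (1 + X) ^ c := by
  rw [Derivation.leibniz_pow, map_add, Derivation.map_one_eq_zero, zero_add, onePlusXDeriv_X]
  cases c with
  | zero => simp
  | succ c => simp [pow_succ]

theorem X_pow_mul_pow_mul_iterate_onePlusXDeriv {c : ℕ} {W : A⟦X⟧}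
    (hW : W * (X * ((1 + X) ^ c - 1)) = (c : A⟦X⟧) * X - ((1 + X) ^ c - 1)) (m : ℕ) :
    X ^ (m + 1) * ((1 + X) ^ c - 1) ^ (m + 1) * ((-1) ^ m * (onePlusXDeriv A)^[m] W) =
      (c : A⟦X⟧) ^ (m + 1) * X ^ (m + 1) * Polynomial.aeval ((1 + X) ^ c - 1) (hPoly m)
        - ((1 + X) ^ c - 1) ^ (m + 1) * Polynomial.aeval (X : A⟦X⟧) (hPoly m) := by
  set Q : A⟦X⟧ := (1 + X) ^ c - 1
  have hQ : onePlusXDeriv A Q = c * (1 + Q) := by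
    simp only [Q, map_sub, Derivation.map_one_eq_zero, sub_zero, onePlusXDeriv_one_add_X_pow]
    ring
  induction m with
  | zero =>
    simp only [zero_add, pow_one, pow_zero, Function.iterate_zero, id_eq, one_mul, hPoly, map_one,
      mul_one]
    linear_combination hW
  | succ m ih =>
    have hD := congrArg (onePlusXDeriv A) ih
    simp only [Derivation.leibniz, Derivation.leibniz_pow, Derivation.map_aeval, map_sub, map_neg,
      Derivation.map_one_eq_zero, Derivation.map_natCast, hQ, onePlusXDeriv_X, smul_eq_mul,
      nsmul_eq_mul, neg_zero, mul_zero, add_zero, Nat.add_sub_cancel] at hD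
    rw [Function.iterate_succ_apply']
    simp only [aeval_hPoly_succ]
    push_cast at hD ⊢
    linear_combination (-(X * Q)) * hD +
      (((m : A⟦X⟧) + 1) * ((c : A⟦X⟧) * X * (1 + Q) + (1 + X) * Q)) * ih

lemma exists_one_add_X_pow_sub_one_eq_X_mul (c : ℕ) :
    ∃ R : A⟦X⟧, (1 + X) ^ c - 1 = X * R ∧ constantCoeff R = c := by
  obtain ⟨R, hR⟩ := X_dvd_iff.2 (by simp : constantCoeff ((1 + X : A⟦X⟧) ^ c - 1) = 0)
  refine ⟨R, hR, ?_⟩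
  have h1 := congrArg (coeff 1) hR
  rw [coeff_succ_X_mul, coeff_zero_eq_constantCoeff_apply] at h1
  rw [← h1, map_sub, coeff_one, ← Polynomial.coe_X, ← Polynomial.coe_one, ← Polynomial.coe_add,
    ← Polynomial.coe_pow, Polynomial.coeff_coe, Polynomial.coeff_one_add_X_pow]
  simp

lemma exists_mul_X_mul_one_add_X_pow_sub_one_eq {c : ℕ} (hc : IsUnit (c : A)) :
    ∃ W : A⟦X⟧, W * (X * ((1 + X) ^ c - 1)) = (c : A⟦X⟧) * X - ((1 + X) ^ c - 1) := by
  obtain ⟨R, hQ, hR0⟩ := exists_one_add_X_pow_sub_one_eq_X_mul (A := A) c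
  have hR : IsUnit R := isUnit_iff_constantCoeff.2 (hR0 ▸ hc)
  obtain ⟨S, hS⟩ := X_dvd_iff.2 (by simp [hR0] : constantCoeff ((c : A⟦X⟧) - R) = 0)
  refine ⟨S * ↑hR.unit⁻¹, ?_⟩
  rw [hQ]
  linear_combination (-X) * hS + X ^ 2 * S * hR.mul_val_inv

lemma X_pow_mul_one_add_X_pow_sub_one_pow_dvd_iff {c : ℕ} (hc : IsUnit (c : A)) (m : ℕ)
    {f : A⟦X⟧} :
    X ^ (m + 2) * ((1 + X) ^ c - 1) ^ (m + 1) ∣ f ↔ X ^ (2 * m + 3) ∣ f := by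
  obtain ⟨R, hQ, hR0⟩ := exists_one_add_X_pow_sub_one_eq_X_mul (A := A) c
  have hR : IsUnit R := isUnit_iff_constantCoeff.2 (hR0 ▸ hc)
  rw [hQ, show X ^ (m + 2) * (X * R) ^ (m + 1) = X ^ (2 * m + 3) * R ^ (m + 1) by ring]
  exact (hR.pow _).mul_right_dvd

section ExpSubst

variable [Algebra ℚ A]

lemma hasSubst_exp_sub_one : HasSubst (exp A - 1) :=
  HasSubst.of_constantCoeff_zero' (by simp)

lemma derivative_subst_exp_sub_one (f : A⟦X⟧) :
    d⁄dX A (f.subst (exp A - 1)) = (onePlusXDeriv A f).subst (exp A - 1) := by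
  have h1X : (1 + X : A⟦X⟧).subst (exp A - 1) = exp A := by
    rw [← coe_substAlgHom hasSubst_exp_sub_one, map_add, map_one, substAlgHom_X]
    ring
  rw [derivative_subst hasSubst_exp_sub_one, onePlusXDeriv_apply,
    subst_mul hasSubst_exp_sub_one, h1X, map_sub, derivative_exp, Derivation.map_one_eq_zero,
    sub_zero, mul_comm]

lemma iterate_derivative_subst_exp_sub_one (n : ℕ) (f : A⟦X⟧) :
    (d⁄dX A)^[n] (f.subst (exp A - 1)) = ((onePlusXDeriv A)^[n] f).subst (exp A - 1) := by
  induction n with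
  | zero => rfl
  | succ n ih =>
    rw [Function.iterate_succ_apply', ih, derivative_subst_exp_sub_one,
      Function.iterate_succ_apply']

lemma constantCoeff_subst_exp_sub_one (f : A⟦X⟧) :
    constantCoeff (f.subst (exp A - 1)) = constantCoeff f := by
  conv_lhs => rw [eq_X_mul_shift_add_const f, ← coe_substAlgHom hasSubst_exp_sub_one]
  rw [map_add, map_mul, substAlgHom_X, coe_substAlgHom, subst_C, map_add, map_mul, map_sub,
    constantCoeff_exp, map_one, sub_self, zero_mul, zero_add]
  exact constantCoeff_C (constantCoeff f)

lemma constantCoeff_iterate_onePlusXDeriv (n : ℕ) (f : A⟦X⟧) :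
    constantCoeff ((onePlusXDeriv A)^[n] f) = n.factorial * coeff n (f.subst (exp A - 1)) := by
  rw [← constantCoeff_iterate_derivative, iterate_derivative_subst_exp_sub_one,
    constantCoeff_subst_exp_sub_one]

end ExpSubst

lemma X_mul_subst_exp_sub_one_eq {c : ℕ} (hc : c ≠ 0) {W : ℚ⟦X⟧}
    (hW : W * (X * ((1 + X) ^ c - 1)) = (c : ℚ⟦X⟧) * X - ((1 + X) ^ c - 1)) :
    X * W.subst (exp ℚ - 1) = rescale (c : ℚ) (bernoulliPowerSeries ℚ) - bernoulliPowerSeries ℚ := by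
  set ε : ℚ⟦X⟧ := exp ℚ - 1
  set εc : ℚ⟦X⟧ := rescale (c : ℚ) (exp ℚ) - 1
  have hσ := congrArg (substAlgHom (hasSubst_exp_sub_one (A := ℚ))) hW
  simp only [map_mul, map_sub, map_pow, map_add, map_one, map_natCast, substAlgHom_X,
    coe_substAlgHom] at hσ
  rw [show 1 + (exp ℚ - 1) = exp ℚ by ring, exp_pow_eq_rescale_exp] at hσ
  have hB : bernoulliPowerSeries ℚ * ε = X := bernoulliPowerSeries_mul_exp_sub_one ℚ
  have hBc : rescale (c : ℚ) (bernoulliPowerSeries ℚ) * εc = (c : ℚ⟦X⟧) * X := by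
    simpa [ε, εc, rescale_X] using congrArg (rescale (c : ℚ)) hB
  have hε : ε ≠ 0 := fun h => by simpa [ε] using congrArg (coeff 1) h
  have hεc : εc ≠ 0 := fun h => by simpa [εc, hc] using congrArg (coeff 1) h
  refine mul_right_cancel₀ (mul_ne_zero hε hεc) ?_
  linear_combination X * hσ + εc * hB - ε * hBc

theorem constantCoeff_iterate_onePlusXDeriv_eq_bernoulli {c : ℕ} (hc : c ≠ 0) {W : ℚ⟦X⟧}
    (hW : W * (X * ((1 + X) ^ c - 1)) = (c : ℚ⟦X⟧) * X - ((1 + X) ^ c - 1)) (n : ℕ) :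
    constantCoeff ((onePlusXDeriv ℚ)^[n] W) =
      ((c : ℚ) ^ (n + 1) - 1) * (bernoulli (n + 1) / (n + 1)) := by
  have h := congrArg (coeff (n + 1)) (X_mul_subst_exp_sub_one_eq hc hW)
  simp only [coeff_succ_X_mul, map_sub, coeff_rescale, bernoulliPowerSeries, coeff_mk,
    Algebra.algebraMap_self, RingHom.id_apply] at h
  rw [constantCoeff_iterate_onePlusXDeriv, h, Nat.factorial_succ]
  push_cast
  field_simp

end PowerSeries

-- The difference in the theorem, with `k = m + 2`.
noncomputable def gammaDefect (A : Type*) [CommRing A] (c m : ℕ) (δ : A) : A⟦X⟧ :=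
  (c : A⟦X⟧) ^ (m + 1) * X ^ (m + 1) * Polynomial.aeval ((1 + X : A⟦X⟧) ^ c - 1) (hPoly m) -
    ((1 + X : A⟦X⟧) ^ c - 1) ^ (m + 1) * Polynomial.aeval (X : A⟦X⟧) (hPoly m) -
    ((c : A⟦X⟧) ^ (m + 1) - 1) * C δ * X ^ (m + 1) * ((1 + X : A⟦X⟧) ^ c - 1) ^ (m + 1)

lemma map_gammaDefect {A B : Type*} [CommRing A] [CommRing B] (φ : A →+* B) (c m : ℕ) (δ : A) :
    map φ (gammaDefect A c m δ) = gammaDefect B c m (φ δ) := by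
  have hmap (f : A⟦X⟧) (P : Polynomial ℤ) :
      map φ (Polynomial.aeval f P) = Polynomial.aeval (map φ f) P := by
    rw [Polynomial.aeval_def, Polynomial.aeval_def, Polynomial.hom_eval₂,
      RingHom.ext_int ((map φ).comp (algebraMap ℤ A⟦X⟧)) (algebraMap ℤ B⟦X⟧)]
  simp [gammaDefect, hmap]

lemma X_pow_dvd_of_X_pow_dvd_map {A B : Type*} [CommRing A] [CommRing B] {φ : A →+* B}
    (hφ : Function.Injective φ) {n : ℕ} {f : A⟦X⟧} (h : X ^ n ∣ map φ f) : X ^ n ∣ f := by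
  rw [X_pow_dvd_iff] at h ⊢
  exact fun i hi => hφ (by simpa using h i hi)

theorem X_pow_dvd_gammaDefect_rat {c : ℕ} (hc : c ≠ 0) (m : ℕ) :
    X ^ (2 * m + 3) ∣ gammaDefect ℚ c m ((-1) ^ m * (bernoulli (m + 1) / (m + 1))) := by
  have hcu : IsUnit (c : ℚ) := isUnit_iff_ne_zero.2 (Nat.cast_ne_zero.2 hc)
  obtain ⟨W, hW⟩ := exists_mul_X_mul_one_add_X_pow_sub_one_eq hcu
  rw [← X_pow_mul_one_add_X_pow_sub_one_pow_dvd_iff hcu]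
  set δ : ℚ := (-1) ^ m * (bernoulli (m + 1) / (m + 1))
  set G : ℚ⟦X⟧ := (-1) ^ m * (onePlusXDeriv ℚ)^[m] W - ((c : ℚ⟦X⟧) ^ (m + 1) - 1) * C δ
  have hG : constantCoeff G = 0 := by
    simp only [G, δ, map_sub, map_mul, map_pow, map_neg, map_one, map_natCast, constantCoeff_C,
      constantCoeff_iterate_onePlusXDeriv_eq_bernoulli hc hW]
    ring
  obtain ⟨g, hg⟩ := X_dvd_iff.2 hG
  refine ⟨g, ?_⟩
  rw [gammaDefect, ← X_pow_mul_pow_mul_iterate_onePlusXDeriv hW]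
  linear_combination X ^ (m + 1) * ((1 + X) ^ c - 1) ^ (m + 1) * hg

theorem gamma_action_xk_integral_general (p : ℕ) [Fact p.Prime]
    (k : ℕ) (hk : 2 ≤ k) (hkp : k ≤ p - 1)
    (c : ℕ) (hpc : ¬ (p ∣ c)) :
    ∃ δ : ℤ_[p],
      (δ : ℚ_[p]) = (((-1) ^ k * _root_.bernoulli (k - 1) / ((k : ℚ) - 1) : ℚ) : ℚ_[p]) ∧
      (PowerSeries.X : PowerSeries ℤ_[p]) ^ k *
          ((1 + PowerSeries.X : PowerSeries ℤ_[p]) ^ c - 1) ^ (k - 1) ∣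
        (c : PowerSeries ℤ_[p]) ^ (k - 1) * (PowerSeries.X : PowerSeries ℤ_[p]) ^ (k - 1) *
            Polynomial.aeval ((1 + PowerSeries.X : PowerSeries ℤ_[p]) ^ c - 1) (hPoly (k - 2)) -
          ((1 + PowerSeries.X : PowerSeries ℤ_[p]) ^ c - 1) ^ (k - 1) *
            Polynomial.aeval (PowerSeries.X : PowerSeries ℤ_[p]) (hPoly (k - 2)) -
          ((c : PowerSeries ℤ_[p]) ^ (k - 1) - 1) * PowerSeries.C (R := ℤ_[p]) δ *
            (PowerSeries.X : PowerSeries ℤ_[p]) ^ (k - 1) *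
            ((1 + PowerSeries.X : PowerSeries ℤ_[p]) ^ c - 1) ^ (k - 1) := by
  obtain ⟨m, rfl⟩ : ∃ m, k = m + 2 := ⟨k - 2, by omega⟩
  have hc0 : c ≠ 0 := by rintro rfl; exact hpc (dvd_zero p)
  have hc : IsUnit (c : ℤ_[p]) := PadicInt.isUnit_iff.2
    (PadicInt.norm_natCast_eq_one_iff.2 ((Nat.Prime.coprime_iff_not_dvd Fact.out).2 hpc))
  obtain ⟨δ, hδ⟩ : ∃ δ : ℤ_[p],
      (δ : ℚ_[p]) = (((-1) ^ m * (bernoulli (m + 1) / (m + 1)) : ℚ) : ℚ_[p]) := by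
    have h := Padic.norm_bernoulli_div_le_one (p := p) (n := m + 1)
      (fun h => by have := Nat.le_of_dvd m.succ_pos h; omega)
      (fun h => by have := Nat.le_of_dvd m.succ_pos h; omega)
    exact ⟨⟨_, by simpa using h⟩, rfl⟩
  refine ⟨δ, by rw [hδ]; push_cast; ring_nf, ?_⟩
  change X ^ (m + 2) * ((1 + X) ^ c - 1) ^ (m + 1) ∣ gammaDefect ℤ_[p] c m δ
  rw [X_pow_mul_one_add_X_pow_sub_one_pow_dvd_iff hc]
  refine X_pow_dvd_of_X_pow_dvd_map (φ := PadicInt.Coe.ringHom) Subtype.coe_injective ?_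
  have h := map_dvd (map (Rat.castHom ℚ_[p])) (X_pow_dvd_gammaDefect_rat (c := c) hc0 m)
  rw [map_pow, map_X, map_gammaDefect, Rat.coe_castHom, ← hδ] at h
  rwa [map_gammaDefect]

/-- With `Q = (1+X)^c - 1 ∈ ℤ_p[[X]]` (`c ≥ 1` prime to `p`, `2 ≤ k ≤ p-1`),
the rational number `δ_k = (-1)^k B_{k-1}/(k-1)` is `p`-integral, and for the
corresponding `δ ∈ ℤ_p` we have
`c^{k-1} X^{k-1} h_{k-2}(Q) - Q^{k-1} h_{k-2}(X) - (c^{k-1} - 1) δ X^{k-1} Q^{k-1}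
  ∈ X^k Q^{k-1} ℤ_p[[X]]`;
this expresses that `(χ(γ)^{k-1} γ - 1)(x_k) ∈ π ℤ_p[[π]]` for
`x_k = π^{1-k} h_{k-2}(π) - δ_k`. -/
theorem gamma_action_xk_integral (p : ℕ) [Fact p.Prime] (hp : 3 ≤ p)
    (k : ℕ) (hk : 2 ≤ k) (hkp : k ≤ p - 1)
    (c : ℕ) (hc : 1 ≤ c) (hpc : ¬ (p ∣ c)) :
    ∃ δ : ℤ_[p],
      (δ : ℚ_[p]) = (((-1) ^ k * _root_.bernoulli (k - 1) / ((k : ℚ) - 1) : ℚ) : ℚ_[p]) ∧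
      (PowerSeries.X : PowerSeries ℤ_[p]) ^ k *
          ((1 + PowerSeries.X : PowerSeries ℤ_[p]) ^ c - 1) ^ (k - 1) ∣
        (c : PowerSeries ℤ_[p]) ^ (k - 1) * (PowerSeries.X : PowerSeries ℤ_[p]) ^ (k - 1) *
            Polynomial.aeval ((1 + PowerSeries.X : PowerSeries ℤ_[p]) ^ c - 1) (hPoly (k - 2)) -
          ((1 + PowerSeries.X : PowerSeries ℤ_[p]) ^ c - 1) ^ (k - 1) *
            Polynomial.aeval (PowerSeries.X : PowerSeries ℤ_[p]) (hPoly (k - 2)) -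
          ((c : PowerSeries ℤ_[p]) ^ (k - 1) - 1) * PowerSeries.C (R := ℤ_[p]) δ *
            (PowerSeries.X : PowerSeries ℤ_[p]) ^ (k - 1) *
            ((1 + PowerSeries.X : PowerSeries ℤ_[p]) ^ c - 1) ^ (k - 1) :=
  gamma_action_xk_integral_general p k hk hkp c hpc
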